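/- arXiv:2505.09849 — 3 statements merged into one kernel-verified Lean document; each statement's English description precedes it below -/
import Mathlib

section
/- Let r be a positive integer. In the ring ℚ[[X]] of formal power series over ℚ, let B_r = ∑_{k=0}^∞ (1/((r−1)k+1))·C(rk,k)·X^k and let L = ∑_{k=1}^∞ C(rk,k)·X^k/k. Then B_r · L′ = r · B_r′, where ′ denotes the formal derivative of power series. (Since L and log(B_r) both have constant term 0 and B_r has constant term 1, this is equivalent to the paper's identity ∑_{k=1}^∞ C(rk,k)·X^k/k = r·log(B_r(X)).) -/
/-!
Let `F_s` be the series with coefficients `s/(rm+s)·C(rm+s, m)`, so that `F_1 = B_r`. Pascal's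
rule gives `F_{s+1} = F_s + X·F_{s+r}`, and an induction on the `X`-adic precision upgrades this
recursion to `F_p·F_s = F_{p+s}`. Hence `F_r = B_r^r` and `B_r = 1 + X·B_r^r`. Comparing
coefficients then gives `L′ = (r-1)·B_r′ + B_r^r`, while differentiating the functional equation
gives `B_r^{r+1} = (B_r - r(B_r - 1))·B_r′`; the identity is a linear combination of the two.
-/

namespace PowerSeries

/-- The series `F_s` (equal to `B_r ^ s` by `genBinomial_one_pow`). The coefficient at `m = 0`
is split off because the closed formula reads `0/0` there when `s = 0`. -/
noncomputable def genBinomial (r s : ℕ) : ℚ⟦X⟧ :=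
  mk fun m => if m = 0 then 1 else (s : ℚ) / (r * m + s) * ((r * m + s).choose m : ℚ)

variable {r : ℕ}

theorem coeff_genBinomial {s m : ℕ} (h : r * m + s ≠ 0) :
    coeff m (genBinomial r s) = (s : ℚ) / (r * m + s) * ((r * m + s).choose m : ℚ) := by
  rw [genBinomial, coeff_mk]
  split_ifs with hm
  · subst hm
    have hs : (s : ℚ) ≠ 0 := by exact_mod_cast (by simpa using h)
    simp [hs]
  · rfl

theorem genBinomial_zero (r : ℕ) : genBinomial r 0 = 1 := by
  ext m
  by_cases hm : m = 0 <;> simp [genBinomial, coeff_one, hm]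

theorem genBinomial_succ (hr : 0 < r) (s : ℕ) :
    genBinomial r (s + 1) = genBinomial r s + X * genBinomial r (s + r) := by
  ext (_ | n)
  · simp [genBinomial]
  rw [map_add, coeff_succ_X_mul, coeff_genBinomial (by positivity),
    coeff_genBinomial (by positivity), coeff_genBinomial (by positivity),
    show r * n + (s + r) = r * (n + 1) + s by ring,
    show r * (n + 1) + (s + 1) = r * (n + 1) + s + 1 by ring]
  set N := r * (n + 1) + s with hN
  have hN0 : (N : ℚ) ≠ 0 := by positivity
  have pascal : ((N + 1).choose (n + 1) : ℚ) = N.choose n + N.choose (n + 1) := by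
    exact_mod_cast N.choose_succ_succ' n
  have absorb : ((N : ℚ) + 1) * N.choose n = (N + 1).choose (n + 1) * (n + 1) := by
    exact_mod_cast N.add_one_mul_choose_eq n
  have hNQ : (N : ℚ) = r * (n + 1) + s := by rw [hN]; push_cast; ring
  clear_value N
  push_cast
  rw [show (r : ℚ) * (n + 1) + (s + 1) = N + 1 by rw [hNQ]; ring,
    show (r : ℚ) * n + (s + r) = N by rw [hNQ]; ring, ← hNQ]
  field_simp
  linear_combination
    ((N + 1).choose (n + 1) : ℚ) * hNQ + (s * (N + 1) : ℚ) * pascal - r * absorb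

theorem X_pow_dvd_genBinomial_mul_sub (hr : 0 < r) (p m s : ℕ) :
    X ^ m ∣ genBinomial r p * genBinomial r s - genBinomial r (p + s) := by
  induction m generalizing s with
  | zero => exact one_dvd _
  | succ m ihm =>
    induction s with
    | zero => simp [genBinomial_zero]
    | succ s ihs =>
      have split : genBinomial r p * genBinomial r (s + 1) - genBinomial r (p + (s + 1)) =
          (genBinomial r p * genBinomial r s - genBinomial r (p + s)) +
            X * (genBinomial r p * genBinomial r (s + r) - genBinomial r (p + (s + r))) := by
        rw [← add_assoc p s 1, ← add_assoc p s r, genBinomial_succ hr, genBinomial_succ hr]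
        ring
      rw [split]
      refine dvd_add ihs ?_
      rw [pow_succ']
      exact mul_dvd_mul_left X (ihm (s + r))

theorem genBinomial_mul (hr : 0 < r) (p s : ℕ) :
    genBinomial r p * genBinomial r s = genBinomial r (p + s) := by
  rw [← sub_eq_zero]
  ext m
  simpa using X_pow_dvd_iff.mp (X_pow_dvd_genBinomial_mul_sub hr p (m + 1) s) m m.lt_succ_self

theorem genBinomial_one_pow (hr : 0 < r) (s : ℕ) : genBinomial r 1 ^ s = genBinomial r s := by
  induction s with
  | zero => exact (genBinomial_zero r).symm
  | succ s ih => rw [pow_succ, ih, genBinomial_mul hr]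

theorem genBinomial_one_eq_one_add_X_mul_pow (hr : 0 < r) :
    genBinomial r 1 = 1 + X * genBinomial r 1 ^ r := by
  simpa [genBinomial_zero, genBinomial_one_pow hr] using genBinomial_succ hr 0

theorem genBinomial_one_eq_mk (hr : 0 < r) :
    genBinomial r 1 = mk fun k => (((r : ℚ) - 1) * k + 1)⁻¹ * ((r * k).choose k : ℚ) := by
  ext k
  rw [coeff_genBinomial (by positivity), coeff_mk]
  have hk : k ≤ r * k := Nat.le_mul_of_pos_left k hr
  have hd : ((r : ℚ) - 1) * k + 1 = (r * k + 1 - k : ℕ) := by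
    rw [Nat.cast_sub (by omega)]; push_cast; ring
  have hd0 : r * k + 1 - k ≠ 0 := by omega
  rw [hd]
  field_simp
  have h : (((r * k).choose k * (r * k + 1) : ℕ) : ℚ) =
      ((r * k + 1).choose k * (r * k + 1 - k) : ℕ) :=
    congrArg _ ((r * k).choose_mul_succ_eq k)
  push_cast at h ⊢
  linear_combination -h

theorem mul_derivative_pow {R : Type*} [CommSemiring R] (f : R⟦X⟧) (n : ℕ) :
    f * d⁄dX R (f ^ n) = n * f ^ n * d⁄dX R f := by
  rw [derivative_pow]
  cases n with
  | zero => simp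
  | succ n => rw [Nat.add_sub_cancel, pow_succ]; ring

theorem pow_succ_eq_of_eq_one_add_X_mul_pow {R : Type*} [CommRing R] {f : R⟦X⟧} {r : ℕ}
    (h : f = 1 + X * f ^ r) : f ^ (r + 1) = (f - r * (f - 1)) * d⁄dX R f := by
  have hd : d⁄dX R f = f ^ r + X * d⁄dX R (f ^ r) := by
    conv_lhs => rw [h]
    simp only [map_add, derivative_one, Derivation.leibniz, derivative_X, smul_eq_mul]
    ring
  linear_combination (-f) * hd - X * mul_derivative_pow f r + r * d⁄dX R f * h

theorem derivative_mk_choose_div (hr : 0 < r) :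
    d⁄dX ℚ (mk fun k => if k = 0 then 0 else ((r * k).choose k : ℚ) / k) =
      ((r : ℚ⟦X⟧) - 1) * d⁄dX ℚ (genBinomial r 1) + genBinomial r 1 ^ r := by
  have hX : X * genBinomial r 1 ^ r = genBinomial r 1 - 1 := by
    linear_combination -genBinomial_one_eq_one_add_X_mul_pow hr
  rw [show (r : ℚ⟦X⟧) - 1 = C ((r : ℚ) - 1) by simp]
  ext n
  rw [map_add, coeff_C_mul, coeff_derivative, coeff_derivative, coeff_mk, if_neg n.succ_ne_zero,
    ← coeff_succ_X_mul n (genBinomial r 1 ^ r), hX, map_sub, coeff_one, if_neg n.succ_ne_zero,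
    sub_zero, genBinomial_one_eq_mk hr, coeff_mk]
  have hd : ((n : ℚ) + 1) * (r - 1) + 1 ≠ 0 := by rw [← Nat.cast_pred hr]; positivity
  push_cast
  field_simp

end PowerSeries

open PowerSeries

/-- The power series identity `∑_{k≥1} C(rk,k) X^k/k = r log(B_r(X))` in the
differentiated form `B_r · L′ = r · B_r′`, where `B_r` is the generalized
binomial series and `L = ∑_{k≥1} C(rk,k) X^k/k`. -/
theorem stmt0 (r : ℕ) (hr : 0 < r)
    (B L : PowerSeries ℚ)
    (hB : B = PowerSeries.mk fun k => (((r : ℚ) - 1) * k + 1)⁻¹ * ((r * k).choose k : ℚ))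
    (hL : L = PowerSeries.mk fun k => if k = 0 then 0 else ((r * k).choose k : ℚ) / k) :
    B * PowerSeries.derivative ℚ L = (r : PowerSeries ℚ) * PowerSeries.derivative ℚ B := by
  rw [← genBinomial_one_eq_mk hr] at hB
  subst hB hL
  linear_combination genBinomial r 1 * derivative_mk_choose_div hr +
    pow_succ_eq_of_eq_one_add_X_mul_pow (genBinomial_one_eq_one_add_X_mul_pow hr)
end

section
/- One has the identity ∑_{k=0}^{n−1} C(rk,k)·y^{n−k}/(n−k) = ∑_{k=1}^{n} C(rn, n−k)·(−1)^k·(s_k − r)/k in A. -/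
/-!
Put `u = y X / (1 + X)^r`. The hypothesis says `∏ᵢ (1 + cᵢ X) / (1 + X)^r = 1 - u`, and
taking logarithms, `∑_{m ≥ 1} u^m / m = -log (1 - u) = ∑_{k ≥ 1} (-1)^k (s_k - r) X^k / k`.
Since `X^m ∣ u^m`, this holds modulo `X^(n+1)` with the left side cut off at `m = n`.
Multiply by `(1 + X)^(r n)` and compare coefficients of `X^n`: the `m`-th term on the left
contributes `C(r(n-m), n-m) y^m / m`, the right side gives the convolution with `C(r n, ·)`.
No logarithm is needed: both sides vanish at `0` and, over `ℚ`, congruence of their derivatives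
modulo `X^n` suffices.
-/

open Finset PowerSeries

theorem isUnit_natCast_of_ne_zero {R : Type*} [Semiring R] [Algebra ℚ R] {k : ℕ}
    (hk : k ≠ 0) : IsUnit (k : R) := by
  rw [← map_natCast (algebraMap ℚ R)]
  exact (isUnit_iff_ne_zero.mpr (Nat.cast_ne_zero.mpr hk)).map _

namespace PowerSeries

section CommRing

variable {R : Type*} [CommRing R]

noncomputable def invOneAddCMulX (a : R) : R⟦X⟧ := mk fun k => (-a) ^ k

theorem one_add_C_mul_X_mul_invOneAddCMulX (a : R) :
    (1 + C a * X) * invOneAddCMulX a = 1 := by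
  ext (_ | k)
  · simp [invOneAddCMulX]
  · rw [add_mul, one_mul, mul_assoc, map_add, coeff_C_mul, coeff_succ_X_mul]
    rw [coeff_one, if_neg k.succ_ne_zero]
    simp only [invOneAddCMulX, coeff_mk]
    ring

theorem derivative_one_add_C_mul_X (a : R) :
    d⁄dX R (1 + C a * X) = C a * invOneAddCMulX a * (1 + C a * X) := by
  rw [mul_assoc, mul_comm (invOneAddCMulX a), one_add_C_mul_X_mul_invOneAddCMulX]
  simp

theorem derivative_invOneAddCMulX (a : R) :
    d⁄dX R (invOneAddCMulX a) = -(C a * invOneAddCMulX a) * invOneAddCMulX a := by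
  rw [(d⁄dX R).leibniz_of_mul_eq_one
    ((mul_comm _ _).trans (one_add_C_mul_X_mul_invOneAddCMulX a))]
  simp only [map_add, derivative_one, Derivation.leibniz, derivative_X, derivative_C, smul_eq_mul]
  ring

theorem derivative_mul_of_eq_mul {f g a b : R⟦X⟧} (hf : d⁄dX R f = a * f)
    (hg : d⁄dX R g = b * g) : d⁄dX R (f * g) = (a + b) * (f * g) := by
  rw [Derivation.leibniz, hf, hg, smul_eq_mul, smul_eq_mul]
  ring

theorem derivative_prod_of_eq_mul {ι : Type*} (s : Finset ι) (f a : ι → R⟦X⟧)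
    (h : ∀ i ∈ s, d⁄dX R (f i) = a i * f i) :
    d⁄dX R (∏ i ∈ s, f i) = (∑ i ∈ s, a i) * ∏ i ∈ s, f i := by
  induction s using Finset.cons_induction with
  | empty => simp
  | cons i s hi ih =>
    rw [prod_cons, sum_cons]
    exact derivative_mul_of_eq_mul (h i (mem_cons_self i s))
      (ih fun j hj => h j (mem_cons_of_mem hj))

theorem coeff_one_add_X_pow (N k : ℕ) : coeff k ((1 + X : R⟦X⟧) ^ N) = N.choose k := by
  have h : (1 + X : R⟦X⟧) = ((1 + Polynomial.X : Polynomial R) : R⟦X⟧) := by simp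
  rw [h, ← Polynomial.coe_pow, Polynomial.coeff_coe, Polynomial.coeff_one_add_X_pow]

theorem one_add_X_pow_mul_invOneAddCMulX_one_pow {N k : ℕ} (h : k ≤ N) :
    (1 + X : R⟦X⟧) ^ N * invOneAddCMulX 1 ^ k = (1 + X) ^ (N - k) := by
  have hinv : (1 + X : R⟦X⟧) * invOneAddCMulX 1 = 1 := by
    simpa using one_add_C_mul_X_mul_invOneAddCMulX (1 : R)
  rw [← Nat.sub_add_cancel h, pow_add, mul_assoc, ← mul_pow, hinv, one_pow, mul_one,
    Nat.add_sub_cancel]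

/-- `∑_{m=1}^n u^m / m`, the `n`-th partial sum of `-log (1 - u)`. -/
noncomputable def truncNegLogOneSub (n : ℕ) (u : R⟦X⟧) : R⟦X⟧ :=
  ∑ m ∈ range n, C (Ring.inverse ((m + 1 : ℕ) : R)) * u ^ (m + 1)

/-- `-log (∏ i, (1 + c i X) / (1 + X))`; its constant coefficient is `0` because
`Ring.inverse 0 = 0`. -/
noncomputable def powerSumLogSeries {ι : Type*} [Fintype ι] (c : ι → R) : R⟦X⟧ :=
  mk fun k => (-1) ^ k * (∑ i, c i ^ k - Fintype.card ι) * Ring.inverse (k : R)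

theorem coeff_one_add_X_pow_mul_powerSumLogSeries {ι : Type*} [Fintype ι] (c : ι → R)
    (N n : ℕ) :
    coeff n ((1 + X) ^ N * powerSumLogSeries c) =
      ∑ k ∈ Icc 1 n, (N.choose (n - k) : R) * (-1) ^ k *
        (∑ i, c i ^ k - Fintype.card ι) * Ring.inverse (k : R) := by
  rw [mul_comm, coeff_mul, Nat.sum_antidiagonal_eq_sum_range_succ
    (fun i j => coeff i (powerSumLogSeries c) * coeff j ((1 + X : R⟦X⟧) ^ N))]
  symm
  refine sum_subset (fun k hk => ?_) (fun k hk hk' => ?_) |>.trans (sum_congr rfl fun k _ => ?_)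
  · simp only [mem_Icc, mem_range] at hk ⊢
    omega
  · obtain rfl : k = 0 := by simp only [mem_Icc, mem_range] at hk hk'; omega
    simp
  · simp only [powerSumLogSeries, coeff_mk, coeff_one_add_X_pow]
    ring

theorem coeff_one_add_X_pow_mul_truncNegLogOneSub (r n : ℕ) (y : R) :
    coeff n ((1 + X) ^ (r * n) * truncNegLogOneSub n (C y * X * invOneAddCMulX 1 ^ r)) =
      ∑ k ∈ range n,
        ((r * k).choose k : R) * y ^ (n - k) * Ring.inverse ((n - k : ℕ) : R) := by
  rw [truncNegLogOneSub, mul_sum, map_sum]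
  conv_rhs => rw [← sum_range_reflect]
  refine sum_congr rfl fun m hm => ?_
  have hmn : m + 1 ≤ n := mem_range.mp hm
  have e : (1 + X) ^ (r * n) * (C (Ring.inverse ((m + 1 : ℕ) : R)) *
      (C y * X * invOneAddCMulX 1 ^ r) ^ (m + 1)) =
      X ^ (m + 1) * (C (Ring.inverse ((m + 1 : ℕ) : R) * y ^ (m + 1)) *
        (1 + X) ^ (r * (n - (m + 1)))) := by
    rw [Nat.mul_sub, ← one_add_X_pow_mul_invOneAddCMulX_one_pow (Nat.mul_le_mul_left r hmn),
      map_mul, map_pow]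
    ring
  rw [e, coeff_X_pow_mul', if_pos hmn, coeff_C_mul, coeff_one_add_X_pow,
    show n - 1 - m = n - (m + 1) by omega, show n - (n - (m + 1)) = m + 1 by omega]
  ring

end CommRing

section Rat

variable {R : Type*} [CommRing R] [Algebra ℚ R]

theorem X_pow_succ_dvd_of_X_pow_dvd_derivative {f : R⟦X⟧} {n : ℕ}
    (h0 : constantCoeff f = 0) (hd : X ^ n ∣ d⁄dX R f) : X ^ (n + 1) ∣ f := by
  rw [X_pow_dvd_iff] at hd ⊢
  rintro (_ | m) hm
  · simpa using h0
  · have hm' := hd m (by omega)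
    rw [coeff_derivative] at hm'
    exact (isUnit_natCast_of_ne_zero m.succ_ne_zero).mul_left_eq_zero.mp (by exact_mod_cast hm')

theorem derivative_truncNegLogOneSub (n : ℕ) (u : R⟦X⟧) :
    d⁄dX R (truncNegLogOneSub n u) = d⁄dX R u * ∑ m ∈ range n, u ^ m := by
  rw [truncNegLogOneSub, map_sum, mul_sum]
  refine sum_congr rfl fun m _ => ?_
  have hC : C (Ring.inverse ((m + 1 : ℕ) : R)) * ((m + 1 : ℕ) : R⟦X⟧) = 1 := by
    rw [← map_natCast C, ← map_mul,
      Ring.inverse_mul_cancel _ (isUnit_natCast_of_ne_zero m.succ_ne_zero), map_one]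
  rw [Derivation.leibniz, derivative_C, smul_zero, add_zero, smul_eq_mul, derivative_pow,
    Nat.add_sub_cancel]
  linear_combination (u ^ m * d⁄dX R u) * hC

theorem X_pow_succ_dvd_truncNegLogOneSub_sub {u L : R⟦X⟧} (n : ℕ) (hu : X ∣ u)
    (hL : constantCoeff L = 0) (hderiv : d⁄dX R u = d⁄dX R L * (1 - u)) :
    X ^ (n + 1) ∣ truncNegLogOneSub n u - L := by
  have hu0 : constantCoeff u = 0 := X_dvd_iff.mp hu
  apply X_pow_succ_dvd_of_X_pow_dvd_derivative
  · simp [truncNegLogOneSub, hu0, hL]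
  · have h : d⁄dX R (truncNegLogOneSub n u - L) = -(d⁄dX R L * u ^ n) := by
      rw [map_sub, derivative_truncNegLogOneSub, hderiv, mul_assoc, mul_neg_geom_sum]
      ring
    rw [h]
    exact (Dvd.dvd.mul_left (pow_dvd_pow_of_dvd hu n) _).neg_right

theorem derivative_prod_one_add_C_mul_X_mul_invOneAddCMulX {ι : Type*} [Fintype ι]
    (c : ι → R) :
    d⁄dX R (∏ i, (1 + C (c i) * X) * invOneAddCMulX 1) =
      -d⁄dX R (powerSumLogSeries c) * ∏ i, (1 + C (c i) * X) * invOneAddCMulX 1 := by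
  rw [derivative_prod_of_eq_mul _ _
    (fun i => C (c i) * invOneAddCMulX (c i) - C 1 * invOneAddCMulX 1) fun i _ => ?_]
  · congr 1
    ext k
    have hk := Ring.inverse_mul_cancel _ (isUnit_natCast_of_ne_zero (R := R) k.succ_ne_zero)
    have hsum : ∑ i, c i * (-c i) ^ k = (-1) ^ k * ∑ i, c i ^ (k + 1) := by
      rw [mul_sum]
      exact sum_congr rfl fun i _ => by ring
    push_cast at hk
    simp only [map_neg, map_sub, map_sum, coeff_C_mul, powerSumLogSeries, invOneAddCMulX, coeff_mk,
      coeff_derivative, sum_sub_distrib, sum_const, card_univ, nsmul_eq_mul, map_one, one_mul]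
    rw [← map_natCast C, coeff_C_mul, coeff_mk, hsum]
    push_cast
    linear_combination -(-1) ^ k * (∑ i, c i ^ (k + 1) - Fintype.card ι) * hk
  · rw [derivative_mul_of_eq_mul (derivative_one_add_C_mul_X _) (derivative_invOneAddCMulX _)]
    ring

end Rat

end PowerSeries

theorem stmt9_general (A : Type*) [CommRing A] [Algebra ℚ A]
    (r n : ℕ) (y : A) (c : Fin r → A)
    (hfac : (∏ i : Fin r, (1 + Polynomial.C (c i) * Polynomial.X)) =
      (1 + Polynomial.X) ^ r - Polynomial.C y * Polynomial.X) :
    ∑ k ∈ Finset.range n,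
        ((r * k).choose k : A) * y ^ (n - k) * Ring.inverse (((n - k : ℕ) : A)) =
    ∑ k ∈ Finset.Icc 1 n,
        ((r * n).choose (n - k) : A) * (-1 : A) ^ k *
          ((∑ i : Fin r, (c i) ^ k) - (r : A)) * Ring.inverse ((k : A)) := by
  set W : A⟦X⟧ := invOneAddCMulX 1
  set u : A⟦X⟧ := C y * X * W ^ r
  have hprod : ∏ i, (1 + C (c i) * X) * W = 1 - u := by
    have h := congrArg (Polynomial.coeToPowerSeries.ringHom (R := A)) hfac
    simp only [map_prod, map_sub, map_pow, map_mul, map_add, map_one,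
      Polynomial.coeToPowerSeries.ringHom_apply, Polynomial.coe_C, Polynomial.coe_X] at h
    rw [prod_mul_distrib, prod_const, card_univ, Fintype.card_fin, h, sub_mul,
      one_add_X_pow_mul_invOneAddCMulX_one_pow le_rfl, Nat.sub_self, pow_zero]
  have hderiv : d⁄dX A u = d⁄dX A (powerSumLogSeries c) * (1 - u) := by
    have h := derivative_prod_one_add_C_mul_X_mul_invOneAddCMulX c
    rw [hprod, map_sub, derivative_one] at h
    linear_combination -h
  obtain ⟨E, hE⟩ := X_pow_succ_dvd_truncNegLogOneSub_sub n
    (dvd_mul_of_dvd_left (dvd_mul_left X _) _) (by simp [powerSumLogSeries]) hderiv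
  have hcoeff :
      coeff n ((1 + X) ^ (r * n) * (truncNegLogOneSub n u - powerSumLogSeries c)) = 0 := by
    rw [hE, mul_left_comm, coeff_X_pow_mul', if_neg n.lt_succ_self.not_ge]
  rw [mul_sub, map_sub, coeff_one_add_X_pow_mul_truncNegLogOneSub,
    coeff_one_add_X_pow_mul_powerSumLogSeries, Fintype.card_fin, sub_eq_zero] at hcoeff
  exact hcoeff

/-- Theorem 5.1, identity (12):
`∑_{k=0}^{n−1} C(rk,k) y^{n−k}/(n−k) = ∑_{k=1}^n C(rn,n−k) (−1)^k (s_k − r)/k`. -/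
theorem stmt9 (A : Type*) [CommRing A] [Algebra ℚ A]
    (r n : ℕ) (hr : 0 < r) (hn : 0 < n) (y : A) (c : Fin r → A)
    (hfac : (∏ i : Fin r, (1 + Polynomial.C (c i) * Polynomial.X)) =
      (1 + Polynomial.X) ^ r - Polynomial.C y * Polynomial.X) :
    ∑ k ∈ Finset.range n,
        ((r * k).choose k : A) * y ^ (n - k) * Ring.inverse (((n - k : ℕ) : A)) =
    ∑ k ∈ Finset.Icc 1 n,
        ((r * n).choose (n - k) : A) * (-1 : A) ^ k *
          ((∑ i : Fin r, (c i) ^ k) - (r : A)) * Ring.inverse ((k : A)) :=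
  stmt9_general A r n y c hfac
end

section
/- Let p > 3 be a prime. Then, in ℤ/p²ℤ, one has 27·∑_{k=0}^{p−1} C(3k,k)·4^k·(27^k)^{−1} = 3 + 8·p·(3 + q_p(2)), where (27^k)^{−1} denotes the inverse of 27^k in ℤ/p²ℤ (27 is a unit modulo p² since p > 3). (Equivalently, ∑_{0≤k<p} C(3k,k)·(4/27)^k ≡ 1/9 + (8/27)·p·(3 + q_p(2)) (mod p²).) -/
/-!
With `x = 4(1 + X)³` and `y = 27X`, the sum `∑_{k<n} C(3k,k) 4^k 27^(n-1-k)` is the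
coefficient of `X^(n-1)` in `∑_{k<n} x^k y^(n-1-k) = (xⁿ - yⁿ)/(x - y)`, and
`x - y = (X + 4)(2X - 1)²`. Multiplying by the truncation of `81 · 4ⁿ/(x - y)` to degree `< n`,
only `xⁿ = 4ⁿ(1 + X)^(3n)` survives modulo `Xⁿ`. Modulo `p²` the square of `(1 + X)^p - 1` is
divisible by `X^p`, so `(1 + X)^(3p) ≡ 3(1 + X)^p - 2 (mod X^p)`; the resulting sums against
`C(p, i)` are binomial sums, and the Fermat quotients of 2 and 3 express `2^p` and `3^p`
modulo `p²`.
-/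

open Finset Polynomial

section CommRing

variable {R : Type*} [CommRing R]

theorem sum_range_add_one_mul_pow_mul_one_sub_sq (x : R) (n : ℕ) :
    (∑ i ∈ range n, ((i : R) + 1) * x ^ i) * (1 - x) ^ 2 =
      1 - (n + 1) * x ^ n + n * x ^ (n + 1) := by
  induction n with
  | zero => simp
  | succ n ih => rw [sum_range_succ, add_mul, ih]; push_cast; ring

theorem mul_sum_range_pow_mul_choose_succ (x y : R) (n : ℕ) :
    x * ∑ j ∈ range n, x ^ j * y ^ (n - 1 - j) * n.choose (j + 1) = (x + y) ^ n - y ^ n := by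
  rw [add_pow, sum_range_succ', mul_sum]
  have hterm : ∀ j ∈ range n, x * (x ^ j * y ^ (n - 1 - j) * n.choose (j + 1)) =
      x ^ (j + 1) * y ^ (n - (j + 1)) * n.choose (j + 1) := by
    intro j _
    rw [Nat.sub_sub, add_comm 1 j]
    ring
  rw [sum_congr rfl hterm]
  simp

theorem sum_range_add_one_mul_pow_mul_choose_succ (x y : R) (n : ℕ) :
    ∑ j ∈ range n, ((j : R) + 1) * x ^ j * y ^ (n - 1 - j) * n.choose (j + 1) =
      n * (x + y) ^ (n - 1) := by
  cases n with
  | zero => simp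
  | succ m =>
    rw [add_pow, mul_sum]
    refine sum_congr rfl fun j _ => ?_
    have h := congrArg (Nat.cast : ℕ → R) (Nat.add_one_mul_choose_eq m j)
    push_cast at h ⊢
    linear_combination (-(x ^ j * y ^ (m - j))) * h

theorem dvd_one_add_pow_sub_one_add_mul {d A : R} (hA : d ∣ A ^ 2) (m : ℕ) :
    d ∣ (1 + A) ^ m - (1 + m * A) := by
  induction m with
  | zero => simp
  | succ m ih =>
    have h : (1 + A) ^ (m + 1) - (1 + (m + 1 : ℕ) * A) =
        ((1 + A) ^ m - (1 + m * A)) * (1 + A) + m * A ^ 2 := by push_cast; ring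
    rw [h]
    exact dvd_add (dvd_mul_of_dvd_left ih _) (dvd_mul_of_dvd_right hA _)

end CommRing

namespace Polynomial

variable {R : Type*} [CommRing R]

theorem coeff_eq_of_X_pow_dvd_sub {f g : R[X]} {n i : ℕ} (h : X ^ n ∣ f - g) (hi : i < n) :
    f.coeff i = g.coeff i :=
  sub_eq_zero.1 (by rw [← coeff_sub]; exact X_pow_dvd_iff.1 h i hi)

theorem coeff_mul_sum_C_mul_X_pow_sub_one (f : R[X]) (a : ℕ → R) (n : ℕ) :
    (f * ∑ j ∈ range n, C (a j) * X ^ j).coeff (n - 1) =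
      ∑ j ∈ range n, a j * f.coeff (n - 1 - j) := by
  rw [mul_sum, finsetSum_coeff]
  refine sum_congr rfl fun j hj => ?_
  rw [mul_left_comm, coeff_C_mul, coeff_mul_X_pow', if_pos (by grind)]

theorem coeff_sum_pow_mul_pow_sub_one (a b : R) (m n : ℕ) :
    (∑ k ∈ range n, (C a * (1 + X) ^ m) ^ k * (C b * X) ^ (n - 1 - k)).coeff (n - 1) =
      ∑ k ∈ range n, ((m * k).choose k : R) * a ^ k * b ^ (n - 1 - k) := by
  rw [finsetSum_coeff]
  refine sum_congr rfl fun k hk => ?_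
  have hterm : (C a * (1 + X) ^ m) ^ k * (C b * X) ^ (n - 1 - k) =
      C (a ^ k * b ^ (n - 1 - k)) * ((1 + X) ^ (m * k) * X ^ (n - 1 - k)) := by
    rw [map_mul, map_pow, map_pow, pow_mul]
    ring
  rw [hterm, coeff_C_mul, coeff_mul_X_pow', if_pos (by grind), coeff_one_add_X_pow,
    show n - 1 - (n - 1 - k) = k by grind]
  ring

theorem X_pow_dvd_one_add_X_pow_sub_one_sq {p : ℕ} (hp : p.Prime) (h : (p : R) ^ 2 = 0) :
    X ^ p ∣ ((1 + X : R[X]) ^ p - 1) ^ 2 := by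
  obtain ⟨r, hr⟩ := exists_add_pow_prime_eq hp (X : R[X]) 1
  have hp2 : (p : R[X]) ^ 2 = 0 := by rw [← map_natCast C, ← map_pow, h, map_zero]
  refine ⟨X ^ p + 2 * (p : R[X]) * X * r, ?_⟩
  rw [add_comm 1 X, hr]
  linear_combination (X ^ 2 * r ^ 2) * hp2

theorem coeff_one_add_X_pow_mul_prime_mul {p : ℕ} (hp : p.Prime) (h : (p : R) ^ 2 = 0)
    (m : ℕ) (f : R[X]) :
    ((1 + X) ^ (m * p) * f).coeff (p - 1) =
      m * ((1 + X) ^ p * f).coeff (p - 1) - (m - 1) * f.coeff (p - 1) := by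
  have hdvd := dvd_one_add_pow_sub_one_add_mul (X_pow_dvd_one_add_X_pow_sub_one_sq hp h) m
  rw [add_sub_cancel, ← pow_mul, mul_comm p] at hdvd
  have hg : C (m : R) * ((1 + X) ^ p * f) - C ((m : R) - 1) * f =
      (1 + (m : R[X]) * ((1 + X) ^ p - 1)) * f := by
    simp only [map_sub, map_natCast, map_one]
    ring
  have hdvd' : X ^ p ∣ (1 + X) ^ (m * p) * f -
      (C (m : R) * ((1 + X) ^ p * f) - C ((m : R) - 1) * f) := by
    rw [hg, ← sub_mul]
    exact dvd_mul_of_dvd_left hdvd f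
  rw [coeff_eq_of_X_pow_dvd_sub hdvd' (Nat.sub_lt hp.pos one_pos), coeff_sub, coeff_C_mul,
    coeff_C_mul]

end Polynomial

section TruncatedInverse

variable {R : Type*} [CommRing R]

/-- For `j < n`, the coefficient of `X^j` in the power series
`81 · 4ⁿ / ((X + 4)(2X - 1)²) = 4ⁿ (1/(4 + X) + 2/(1 - 2X) + 18/(1 - 2X)²)`. -/
def truncInvCoeff (n j : ℕ) : R :=
  (-1) ^ j * 4 ^ (n - 1 - j) + 2 * 4 ^ n * 2 ^ j + 18 * 4 ^ n * (j + 1) * 2 ^ j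

noncomputable def truncInv (n : ℕ) : R[X] :=
  ∑ j ∈ range n, C (truncInvCoeff n j) * X ^ j

theorem truncInv_eq (n : ℕ) :
    (truncInv n : R[X]) = ∑ j ∈ range n, (-X) ^ j * 4 ^ (n - 1 - j) +
      2 * 4 ^ n * ∑ j ∈ range n, (2 * X) ^ j +
      18 * 4 ^ n * ∑ j ∈ range n, ((j : R[X]) + 1) * (2 * X) ^ j := by
  simp only [truncInv, truncInvCoeff, mul_sum, ← sum_add_distrib]
  refine sum_congr rfl fun j _ => ?_
  simp only [map_add, map_mul, map_pow, map_neg, map_one, map_natCast, map_ofNat]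
  ring

theorem X_pow_dvd_mul_truncInv_sub (n : ℕ) :
    X ^ n ∣ (X + 4) * (2 * X - 1) ^ 2 * truncInv n - C (81 * 4 ^ n : R) := by
  have hA := geom_sum₂_mul (-X : R[X]) 4 n
  have hB := geom_sum_mul (2 * X : R[X]) n
  have hC := sum_range_add_one_mul_pow_mul_one_sub_sq (2 * X : R[X]) n
  refine ⟨-(2 * X - 1) ^ 2 * (-1) ^ n + 2 * 4 ^ n * (X + 4) * (2 * X - 1) * 2 ^ n +
    18 * 4 ^ n * (X + 4) * ((n : R[X]) * 2 ^ (n + 1) * X - ((n : R[X]) + 1) * 2 ^ n), ?_⟩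
  rw [truncInv_eq]
  simp only [map_mul, map_pow, map_ofNat]
  linear_combination -(2 * X - 1) ^ 2 * hA + 2 * 4 ^ n * (X + 4) * (2 * X - 1) * hB +
    18 * 4 ^ n * (X + 4) * hC

theorem coeff_truncInv_sub_one {n : ℕ} (hn : 0 < n) :
    (truncInv n : R[X]).coeff (n - 1) = (-1) ^ (n - 1) + (1 + 9 * n) * 4 ^ n * 2 ^ n := by
  rw [truncInv, finsetSum_coeff, sum_eq_single_of_mem (n - 1) (by simpa using hn)]
  · rw [coeff_C_mul_X_pow, if_pos rfl, truncInvCoeff, Nat.sub_self, Nat.cast_sub hn]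
    obtain ⟨m, rfl⟩ : ∃ m, n = m + 1 := ⟨n - 1, by omega⟩
    simp only [add_tsub_cancel_right, pow_succ]
    push_cast
    ring
  · intro j _ hj
    rw [coeff_C_mul_X_pow, if_neg (Ne.symm hj)]

theorem four_pow_mul_sum_choose_eq_coeff {n : ℕ} (hn : 0 < n) :
    4 ^ n * (81 * ∑ k ∈ range n, ((3 * k).choose k : R) * 4 ^ k * 27 ^ (n - 1 - k)) =
      4 ^ n * ((1 + X) ^ (3 * n) * truncInv n).coeff (n - 1) := by
  set x : R[X] := C 4 * (1 + X) ^ 3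
  set y : R[X] := C 27 * X
  set G := ∑ k ∈ range n, x ^ k * y ^ (n - 1 - k)
  have hxy : x - y = (X + 4) * (2 * X - 1) ^ 2 := by simp only [x, y, map_ofNat]; ring
  have hy : X ^ n ∣ y ^ n * truncInv n :=
    ⟨C (27 ^ n) * truncInv n, by simp only [y, mul_pow, map_pow]; ring⟩
  have hdvd : X ^ n ∣ x ^ n * truncInv n - C (81 * 4 ^ n) * G := by
    convert dvd_add (dvd_mul_of_dvd_right (X_pow_dvd_mul_truncInv_sub n) G) hy using 1
    rw [← hxy]
    linear_combination -truncInv n * geom_sum₂_mul x y n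
  have hxn : x ^ n = C (4 ^ n) * (1 + X) ^ (3 * n) := by
    simp only [x, mul_pow, map_pow, pow_mul]
  have h := coeff_eq_of_X_pow_dvd_sub hdvd (Nat.sub_lt hn one_pos)
  rw [hxn, mul_assoc, coeff_C_mul, coeff_C_mul, coeff_sum_pow_mul_pow_sub_one] at h
  rw [h]
  ring

theorem coeff_one_add_X_pow_mul_truncInv (n : ℕ) :
    ((1 + X) ^ n * truncInv n : R[X]).coeff (n - 1) = (1 + 6 * n) * 4 ^ n * 3 ^ n - 3 ^ n := by
  rw [truncInv, coeff_mul_sum_C_mul_X_pow_sub_one]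
  simp only [coeff_one_add_X_pow]
  rw [sum_congr rfl fun j hj => by
    rw [Nat.choose_symm_of_eq_add (show n = n - 1 - j + (j + 1) by grind)]]
  simp only [truncInvCoeff, add_mul, sum_add_distrib]
  have h1 := mul_sum_range_pow_mul_choose_succ (-1 : R) 4 n
  have h2 : ∑ j ∈ range n, 2 * 4 ^ n * 2 ^ j * (n.choose (j + 1) : R) = 4 ^ n * (3 ^ n - 1) := by
    calc _ = 4 ^ n * (2 * ∑ j ∈ range n, 2 ^ j * 1 ^ (n - 1 - j) * (n.choose (j + 1) : R)) :=
          by rw [mul_sum, mul_sum]; exact sum_congr rfl fun j _ => by ring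
      _ = 4 ^ n * (3 ^ n - 1) := by rw [mul_sum_range_pow_mul_choose_succ]; norm_num
  have h3 : ∑ j ∈ range n, 18 * 4 ^ n * ((j : R) + 1) * 2 ^ j * (n.choose (j + 1) : R) =
      18 * 4 ^ n * (n * 3 ^ (n - 1)) := by
    calc _ = 18 * 4 ^ n * ∑ j ∈ range n, ((j : R) + 1) * 2 ^ j * 1 ^ (n - 1 - j) *
          (n.choose (j + 1) : R) := by
          rw [mul_sum]; exact sum_congr rfl fun j _ => by ring
      _ = 18 * 4 ^ n * (n * 3 ^ (n - 1)) := by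
          rw [sum_range_add_one_mul_pow_mul_choose_succ]; norm_num
  have h4 : (n : R) * 3 ^ (n - 1) * 3 = n * 3 ^ n := by
    cases n with
    | zero => simp
    | succ m => rw [add_tsub_cancel_right, pow_succ]; ring
  rw [h2, h3]
  norm_num at h1
  linear_combination -h1 + 6 * 4 ^ n * h4

end TruncatedInverse

theorem four_pow_mul_sum_choose_eq_of_natCast_sq_eq_zero {R : Type*} [CommRing R] {p : ℕ}
    (hp : p.Prime) (hp2 : p ≠ 2) (h : (p : R) ^ 2 = 0) :
    4 ^ p * (81 * ∑ k ∈ range p, ((3 * k).choose k : R) * 4 ^ k * 27 ^ (p - 1 - k)) =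
      4 ^ p * (3 * ((1 + 6 * p) * 4 ^ p * 3 ^ p - 3 ^ p) -
        2 * (1 + (1 + 9 * p) * 4 ^ p * 2 ^ p)) := by
  rw [four_pow_mul_sum_choose_eq_coeff hp.pos, coeff_one_add_X_pow_mul_prime_mul hp h 3,
    coeff_one_add_X_pow_mul_truncInv, coeff_truncInv_sub_one hp.pos,
    (hp.even_sub_one hp2).neg_one_pow]
  norm_num

def fermatQuotient (p : ℕ) (a : ℤ) : ℤ := (a ^ (p - 1) - 1) / p

theorem intCast_pow_eq_mul_one_add_fermatQuotient {R : Type*} [CommRing R] {p : ℕ}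
    (hp : p.Prime) {a : ℤ} (ha : IsCoprime a p) :
    (a : R) ^ p = a * (1 + p * fermatQuotient p a) := by
  have h := congrArg (Int.cast : ℤ → R) (Int.mul_ediv_cancel' (Int.prime_dvd_pow_sub_one hp ha))
  push_cast at h
  rw [fermatQuotient, h, add_sub_cancel, ← pow_succ', Nat.sub_add_cancel hp.one_le]

theorem isUnit_natCast_of_coprime_of_sq_eq_zero {R : Type*} [CommRing R] {a p : ℕ}
    (h : (p : R) ^ 2 = 0) (hap : a.Coprime p) : IsUnit (a : R) := by
  obtain ⟨u, v, huv⟩ := Nat.isCoprime_iff_coprime.2 hap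
  have hua : (u : R) * a = 1 - v * p := by
    have := congrArg (Int.cast : ℤ → R) huv
    push_cast at this
    linear_combination this
  have hnil : IsNilpotent ((v : R) * p) := ⟨2, by rw [mul_pow, h, mul_zero]⟩
  exact isUnit_of_mul_isUnit_right (hua ▸ hnil.isUnit_one_sub)

theorem sq_twenty_seven_mul_sum_choose_eq {R : Type*} [CommRing R] {p : ℕ} (hp : p.Prime)
    (hp3 : 3 < p) (h : (p : R) ^ 2 = 0) :
    27 ^ 2 * ∑ k ∈ range p, ((3 * k).choose k : R) * 4 ^ k * 27 ^ (p - 1 - k) =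
      27 ^ p * (3 + 8 * p * (3 + fermatQuotient p 2)) := by
  have h2 : Nat.Coprime 2 p := (Nat.coprime_primes Nat.prime_two hp).2 (by omega)
  have h3 : Nat.Coprime 3 p := (Nat.coprime_primes Nat.prime_three hp).2 (by omega)
  have hu4 : IsUnit (4 : R) := by
    exact_mod_cast isUnit_natCast_of_coprime_of_sq_eq_zero h (h2.pow_left 2)
  have h81 := (hu4.pow p).mul_left_cancel
    (four_pow_mul_sum_choose_eq_of_natCast_sq_eq_zero hp (by omega) h)
  have h2p := intCast_pow_eq_mul_one_add_fermatQuotient (R := R) hp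
    (Nat.isCoprime_iff_coprime.2 h2)
  have h3p := intCast_pow_eq_mul_one_add_fermatQuotient (R := R) hp
    (Nat.isCoprime_iff_coprime.2 h3)
  push_cast at h2p h3p
  have h4p : (4 : R) ^ p = (2 ^ p) ^ 2 := by rw [← pow_mul, mul_comm, pow_mul]; norm_num
  have h27p : (27 : R) ^ p = (3 ^ p) ^ 3 := by rw [← pow_mul, mul_comm, pow_mul]; norm_num
  set P : R := (p : R)
  set q : R := (fermatQuotient p 2 : R)
  set c : R := (fermatQuotient p 3 : R)
  rw [show (27 : R) ^ 2 = 9 * 81 by norm_num, mul_assoc, h81, h4p, h27p, h2p, h3p]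
  linear_combination (-243 * c ^ 2 - 108 * q ^ 2 - 1944 * P * c ^ 2 - 81 * P * c ^ 3
    + 3888 * P * q * c - 648 * P * q * c ^ 2 - 1944 * P * q ^ 2 + 324 * P * q ^ 2 * c
    - 144 * P * q ^ 3 - 648 * P ^ 2 * c ^ 3 - 216 * P ^ 2 * q * c ^ 3
    + 1944 * P ^ 2 * q ^ 2 * c - 1296 * P ^ 2 * q ^ 3) * h

theorem ZMod.pow_mul_inv_pow_of_le {m : ℕ} {u : ZMod m} (hu : IsUnit u) {i j : ℕ}
    (h : j ≤ i) : u ^ i * (u ^ j)⁻¹ = u ^ (i - j) := by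
  obtain ⟨k, rfl⟩ := Nat.exists_eq_add_of_le h
  rw [pow_add, mul_right_comm, ZMod.mul_inv_of_unit _ (hu.pow j), one_mul, Nat.add_sub_cancel_left]

/-- `∑_{0≤k<p} C(3k,k) (4/27)^k ≡ 1/9 + (8/27) p (3 + q_p(2)) (mod p²)`,
stated multiplied through by `27`. -/
theorem stmt18 (p : ℕ) [Fact p.Prime] (hp : 3 < p) :
    27 * ∑ k ∈ Finset.range p,
        ((3 * k).choose k : ZMod (p ^ 2)) * 4 ^ k * ((27 : ZMod (p ^ 2)) ^ k)⁻¹ =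
      3 + 8 * (p : ZMod (p ^ 2)) *
        (3 + (((2 ^ (p - 1) - 1) / p : ℤ) : ZMod (p ^ 2))) := by
  have hprime : p.Prime := Fact.out
  have hp2 : (p : ZMod (p ^ 2)) ^ 2 = 0 := by exact_mod_cast ZMod.natCast_self (p ^ 2)
  have h3 : Nat.Coprime 3 p := (Nat.coprime_primes Nat.prime_three hprime).2 (by omega)
  have hu27 : IsUnit (27 : ZMod (p ^ 2)) := by
    exact_mod_cast isUnit_natCast_of_coprime_of_sq_eq_zero hp2 (h3.pow_left 3)
  set s := ∑ k ∈ range p, ((3 * k).choose k : ZMod (p ^ 2)) * 4 ^ k * ((27 : ZMod (p ^ 2)) ^ k)⁻¹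
  have hsum : ∑ k ∈ range p, ((3 * k).choose k : ZMod (p ^ 2)) * 4 ^ k * 27 ^ (p - 1 - k) =
      27 ^ (p - 1) * s := by
    rw [mul_sum]
    refine sum_congr rfl fun k hk => ?_
    rw [← ZMod.pow_mul_inv_pow_of_le hu27 (by grind)]
    ring
  have h27 : (27 : ZMod (p ^ 2)) ^ p = 27 ^ (p - 1) * 27 := by
    rw [← pow_succ, Nat.sub_add_cancel hprime.one_le]
  refine (hu27.pow p).mul_left_cancel ?_
  calc (27 : ZMod (p ^ 2)) ^ p * (27 * s) = 27 ^ 2 * (27 ^ (p - 1) * s) := by rw [h27]; ring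
    _ = _ := by rw [← hsum]; exact sq_twenty_seven_mul_sum_choose_eq hprime hp hp2
end
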